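/- Let o, t, m be natural numbers, W' a real o×t matrix, W'' a real o×m matrix, and W := fromColumns W' W'' the o×(t⊕m) block matrix. Let L be the linear map from real o×(t⊕m) matrices to real o×t matrices sending N to its left block (the submatrix of N with column indices in the first summand Fin t). Then the image under L of the set { N | ∃ N₁ N₂, N = N₁ + N₂, the row space of N₁ is contained in the row space of W, and the column space of N₂ is contained in the column space of W } equals the set { N' | ∃ N'₁ N'₂, N' = N'₁ + N'₂, the row space of N'₁ is contained in the row space of W', and the column space of N'₂ is contained in the column space of W }. -/

import Mathlib

open Matrix

/-- The column space of a real matrix `M`, i.e. the range of `x ↦ M.mulVec x`. -/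
def colSpace {a b : Type*} [Fintype b] (M : Matrix a b ℝ) : Submodule ℝ (a → ℝ) :=
  LinearMap.range M.mulVecLin

/-- The row space of a real matrix `M`, i.e. the column space of `Mᵀ`. -/
def rowSpace {a b : Type*} [Fintype a] (M : Matrix a b ℝ) : Submodule ℝ (b → ℝ) :=
  colSpace Mᵀ

/-- The linear map taking an `o×(t⊕m)` matrix to its left `o×t` block. -/
def leftBlock (o t m : ℕ) :
    Matrix (Fin o) (Fin t ⊕ Fin m) ℝ →ₗ[ℝ] Matrix (Fin o) (Fin t) ℝ where
  toFun N := Matrix.of fun i j => N i (Sum.inl j)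
  map_add' _ _ := rfl
  map_smul' _ _ := rfl

/-!
Row spaces are contained in each other exactly when one matrix is a left multiple of the
other, and column spaces exactly when it is a right multiple. The projection to the left block
is right multiplication by `fromRows 1 0`, so it maps `A * (W' | W'')` to `A * W'` and shrinks
column spaces; conversely `A * W'` and `N` lift to `A * (W' | W'')` and `(N | 0)`.
-/

section SpaceInclusions

variable {a b c : Type*} [Fintype b]

theorem colSpace_eq_span_col (M : Matrix a b ℝ) :
    colSpace M = Submodule.span ℝ (Set.range M.col) :=
  range_mulVecLin M

theorem colSpace_mul_le [Fintype c] (A : Matrix a b ℝ) (B : Matrix b c ℝ) :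
    colSpace (A * B) ≤ colSpace A := by
  rw [colSpace, colSpace, mulVecLin_mul]
  exact LinearMap.range_comp_le_range _ _

theorem colSpace_le_iff_exists_eq_mul [Fintype c] (N : Matrix a c ℝ) (W : Matrix a b ℝ) :
    colSpace N ≤ colSpace W ↔ ∃ B : Matrix b c ℝ, N = W * B := by
  refine ⟨fun h => ?_, fun ⟨B, hB⟩ => hB ▸ colSpace_mul_le W B⟩
  rw [colSpace_eq_span_col, Submodule.span_le, Set.range_subset_iff] at h
  choose x hx using h
  refine ⟨(of x)ᵀ, ext fun i j => ?_⟩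
  simpa [mulVec, mul_apply, dotProduct] using (congrFun (hx j) i).symm

theorem rowSpace_mul_le [Fintype a] (A : Matrix a b ℝ) (B : Matrix b c ℝ) :
    rowSpace (A * B) ≤ rowSpace B := by
  rw [rowSpace, rowSpace, transpose_mul]
  exact colSpace_mul_le _ _

theorem rowSpace_le_iff_exists_eq_mul [Fintype c] (N : Matrix c a ℝ) (W : Matrix b a ℝ) :
    rowSpace N ≤ rowSpace W ↔ ∃ A : Matrix c b ℝ, N = A * W := by
  rw [rowSpace, rowSpace, colSpace_le_iff_exists_eq_mul]
  refine ⟨fun ⟨B, hB⟩ => ⟨Bᵀ, ?_⟩, fun ⟨A, hA⟩ => ⟨Aᵀ, ?_⟩⟩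
  · rw [← transpose_transpose N, hB, transpose_mul, transpose_transpose]
  · rw [hA, transpose_mul]

end SpaceInclusions

section Blocks

variable {a b n₁ n₂ : Type*} [Fintype b] [Fintype n₁] [Fintype n₂] [DecidableEq n₁]

theorem toCols₁_eq_mul_fromRows (N : Matrix a (n₁ ⊕ n₂) ℝ) :
    N.toCols₁ = N * fromRows (1 : Matrix n₁ n₁ ℝ) (0 : Matrix n₂ n₁ ℝ) := by
  conv_rhs => rw [← fromCols_toCols N]
  rw [fromCols_mul_fromRows, Matrix.mul_one, Matrix.mul_zero, add_zero]

theorem toCols₁_mul (A : Matrix a b ℝ) (N : Matrix b (n₁ ⊕ n₂) ℝ) :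
    (A * N).toCols₁ = A * N.toCols₁ := by
  rw [toCols₁_eq_mul_fromRows, toCols₁_eq_mul_fromRows, Matrix.mul_assoc]

theorem toCols₁_mul_fromCols (A : Matrix a b ℝ) (W₁ : Matrix b n₁ ℝ) (W₂ : Matrix b n₂ ℝ) :
    (A * fromCols W₁ W₂).toCols₁ = A * W₁ := by
  rw [toCols₁_mul, toCols₁_fromCols]

theorem colSpace_toCols₁_le (N : Matrix a (n₁ ⊕ n₂) ℝ) : colSpace N.toCols₁ ≤ colSpace N :=
  toCols₁_eq_mul_fromRows N ▸ colSpace_mul_le _ _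

theorem colSpace_fromCols_zero_le (N : Matrix a n₁ ℝ) :
    colSpace (fromCols N (0 : Matrix a n₂ ℝ)) ≤ colSpace N := by
  have : fromCols N (0 : Matrix a n₂ ℝ) =
      N * fromCols (1 : Matrix n₁ n₁ ℝ) (0 : Matrix n₁ n₂ ℝ) := by
    rw [mul_fromCols, Matrix.mul_one, Matrix.mul_zero]
  exact this ▸ colSpace_mul_le _ _

end Blocks

theorem leftBlock_eq_toCols₁ (o t m : ℕ) (N : Matrix (Fin o) (Fin t ⊕ Fin m) ℝ) :
    leftBlock o t m N = N.toCols₁ :=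
  rfl

/-- The image of the tangent space `ℝ^o ⊗ rowspace(W) + colspace(W) ⊗ ℝ^{t+m}` of the
determinantal variety at `W = (W' | W'')` under the projection onto the first `t`
columns equals `ℝ^o ⊗ rowspace(W') + colspace(W) ⊗ ℝ^t` (proof of Theorem 4.2). -/
theorem tangent_space_projection (o t m : ℕ)
    (W' : Matrix (Fin o) (Fin t) ℝ) (W'' : Matrix (Fin o) (Fin m) ℝ) :
    (leftBlock o t m) ''
      { N : Matrix (Fin o) (Fin t ⊕ Fin m) ℝ |
        ∃ N₁ N₂, N = N₁ + N₂ ∧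
          rowSpace N₁ ≤ rowSpace (Matrix.fromCols W' W'') ∧
          colSpace N₂ ≤ colSpace (Matrix.fromCols W' W'') } =
    { N' : Matrix (Fin o) (Fin t) ℝ |
        ∃ N'₁ N'₂, N' = N'₁ + N'₂ ∧
          rowSpace N'₁ ≤ rowSpace W' ∧
          colSpace N'₂ ≤ colSpace (Matrix.fromCols W' W'') } := by
  ext Q
  constructor
  · rintro ⟨N, ⟨N₁, N₂, rfl, h₁, h₂⟩, rfl⟩
    obtain ⟨A, rfl⟩ := (rowSpace_le_iff_exists_eq_mul _ _).1 h₁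
    refine ⟨A * W', N₂.toCols₁, ?_, rowSpace_mul_le A W', (colSpace_toCols₁_le N₂).trans h₂⟩
    rw [map_add, leftBlock_eq_toCols₁, leftBlock_eq_toCols₁, toCols₁_mul_fromCols]
  · rintro ⟨N'₁, N'₂, rfl, h₁, h₂⟩
    obtain ⟨A, rfl⟩ := (rowSpace_le_iff_exists_eq_mul _ _).1 h₁
    refine ⟨A * fromCols W' W'' + fromCols N'₂ 0,
      ⟨_, _, rfl, rowSpace_mul_le _ _, (colSpace_fromCols_zero_le N'₂).trans h₂⟩, ?_⟩
    rw [map_add, leftBlock_eq_toCols₁, leftBlock_eq_toCols₁, toCols₁_mul_fromCols,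
      toCols₁_fromCols]
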